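/- Weighted single-coupling cosh–sinh inequality (intermediate step): Let B ⊆ V with λ_B > 0, and suppose P_B satisfies the density-ratio condition with parameter b ∈ ℝ. Then for any measurable f with f(J) ≥ 0 and f(flip_B J) = f(J) for all J, one has E[ f(J) ( cosh(2βλ_B J_B) − ⟨σ_B⟩_J sinh(2βλ_B J_B) ) ] ≥ E[ f(J) exp(−b J_B) ]. -/

import Mathlib

open MeasureTheory Real

variable {V : Type*}

/-- Spin value of a configuration at a site: `+1` or `-1`. -/
noncomputable def spin (σ : V → Bool) (i : V) : ℝ := if σ i then 1 else -1

/-- `σ_A = ∏_{i ∈ A} σ_i`. -/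
noncomputable def sigmaA (A : Finset V) (σ : V → Bool) : ℝ := ∏ i ∈ A, spin σ i

/-- `β Σ_A λ_A J_A σ_A` (minus the Hamiltonian, times β). -/
noncomputable def energy [Fintype V] [DecidableEq V] (β : ℝ) (lam J : Finset V → ℝ)
    (σ : V → Bool) : ℝ := β * ∑ A : Finset V, lam A * J A * sigmaA A σ

/-- Partition function `Z_J`. -/
noncomputable def Zfun [Fintype V] [DecidableEq V] (β : ℝ) (lam J : Finset V → ℝ) : ℝ :=
  ∑ σ : V → Bool, Real.exp (energy β lam J σ)

/-- Gibbs expectation `⟨σ_B⟩_J`. -/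
noncomputable def corr [Fintype V] [DecidableEq V] (β : ℝ) (lam J : Finset V → ℝ)
    (B : Finset V) : ℝ :=
  (∑ σ : V → Bool, sigmaA B σ * Real.exp (energy β lam J σ)) / Zfun β lam J

/-- Gibbs expectation `⟨σ_B σ_C⟩_J`. -/
noncomputable def corr2 [Fintype V] [DecidableEq V] (β : ℝ) (lam J : Finset V → ℝ)
    (B C : Finset V) : ℝ :=
  (∑ σ : V → Bool, sigmaA B σ * sigmaA C σ * Real.exp (energy β lam J σ)) / Zfun β lam J

/-- Negate the coupling indexed by `B`. -/
noncomputable def flipJ [DecidableEq V] (B : Finset V) (J : Finset V → ℝ) : Finset V → ℝ :=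
  Function.update J B (-(J B))

/-- The density-ratio condition `P(-x) = exp(-2 b x) P(x)`: the pushforward of `P` under
negation equals the measure with density `x ↦ exp (-2 b x)` with respect to `P`. -/
def densityRatio (P : Measure ℝ) (b : ℝ) : Prop :=
  P.map (fun x => -x) = P.withDensity (fun x => ENNReal.ofReal (Real.exp (-2 * b * x)))

/-!
Write `t = 2βλ_B J_B`. Flipping `J_B` multiplies each Boltzmann weight by `exp (-t σ_B)
= cosh t - σ_B sinh t`, so `cosh t - ⟨σ_B⟩_J sinh t = r(J) := Z(flip_B J) / Z(J)`, and
`r (flip_B J) = 1 / r J`. The density-ratio condition says that `flip_B` pushes the product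
measure forward to itself with density `c² = exp (-2 b J_B)`, where `c = exp (-b J_B)`. By AM-GM,
`2 f c ≤ f r + c² f / r` pointwise, and the change of variables `J ↦ flip_B J` turns the
integral of `c² f / r` into that of `f r`; hence `E[f c] ≤ E[f r]`.
-/

namespace MeasureTheory.Measure

variable {ι : Type*} [DecidableEq ι] {α : ι → Type*} [∀ i, MeasurableSpace (α i)]
  {μ : (i : ι) → Measure (α i)} [∀ i, SigmaFinite (μ i)]

theorem sigmaFinite_update (i : ι) (ν : Measure (α i)) [SigmaFinite ν] (j : ι) :
    SigmaFinite (Function.update μ i ν j) := by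
  rcases eq_or_ne j i with rfl | h
  · rw [Function.update_self]; infer_instance
  · rw [Function.update_of_ne h]; infer_instance

variable [Fintype ι]

theorem pi_update_withDensity (i : ι) {ρ : α i → ENNReal} (hρ : Measurable ρ)
    [SigmaFinite ((μ i).withDensity ρ)] :
    Measure.pi (Function.update μ i ((μ i).withDensity ρ))
      = (Measure.pi μ).withDensity fun x => ρ (x i) := by
  have := sigmaFinite_update (μ := μ) i ((μ i).withDensity ρ)
  refine pi_eq fun s hs => ?_
  rw [withDensity_apply _ (MeasurableSet.univ_pi hs), restrict_pi_pi,
    ← lintegral_map hρ (measurable_pi_apply i), pi_map_eval, lintegral_smul_measure,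
    ← Finset.prod_erase_mul _ _ (Finset.mem_univ i), Function.update_self,
    withDensity_apply _ (hs i), smul_eq_mul]
  congr 1
  refine Finset.prod_congr rfl fun j hj => ?_
  rw [Function.update_of_ne (Finset.ne_of_mem_erase hj), restrict_apply_univ]

theorem pi_map_update (i : ι) {φ : α i → α i} (hφ : Measurable φ)
    [SigmaFinite ((μ i).map φ)] :
    (Measure.pi μ).map (fun x => Function.update x i (φ (x i)))
      = Measure.pi (Function.update μ i ((μ i).map φ)) := by
  have := sigmaFinite_update (μ := μ) i ((μ i).map φ)
  refine (pi_eq fun s hs => ?_).symm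
  have hpre : (fun x : (j : ι) → α j => Function.update x i (φ (x i))) ⁻¹' Set.univ.pi s
      = Set.univ.pi (Function.update s i (φ ⁻¹' s i)) := by
    ext x
    simp only [Set.mem_preimage, Set.mem_univ_pi]
    refine forall_congr' fun j => ?_
    rcases eq_or_ne j i with rfl | h
    · simp
    · simp [Function.update_of_ne h]
  rw [map_apply (by fun_prop) (MeasurableSet.univ_pi hs), hpre, pi_pi]
  refine Finset.prod_congr rfl fun j _ => ?_
  rcases eq_or_ne j i with rfl | h
  · simp [map_apply hφ (hs j)]
  · simp [Function.update_of_ne h]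

theorem pi_map_update_eq_withDensity (i : ι) {φ : α i → α i} (hφ : Measurable φ)
    {ρ : α i → ENNReal} (hρ : Measurable ρ) [SigmaFinite ((μ i).map φ)]
    (h : (μ i).map φ = (μ i).withDensity ρ) :
    (Measure.pi μ).map (fun x => Function.update x i (φ (x i)))
      = (Measure.pi μ).withDensity fun x => ρ (x i) := by
  have : SigmaFinite ((μ i).withDensity ρ) := h ▸ inferInstance
  rw [pi_map_update i hφ, h, pi_update_withDensity i hρ]

end MeasureTheory.Measure

section ChangeOfVariables

variable {X : Type*} [MeasurableSpace X] {μ : Measure X} {T : X → X} {f r c : X → ℝ}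

theorem lintegral_mul_le_of_map_eq_withDensity (hT : Measurable T)
    (hmap : μ.map T = μ.withDensity fun x => ENNReal.ofReal (c x ^ 2))
    (hf : Measurable f) (hr : Measurable r) (hc : Measurable c)
    (hf0 : ∀ x, 0 ≤ f x) (hr0 : ∀ x, 0 < r x)
    (hfT : ∀ x, f (T x) = f x) (hrT : ∀ x, r (T x) * r x = 1) :
    ∫⁻ x, ENNReal.ofReal (f x * c x) ∂μ ≤ ∫⁻ x, ENNReal.ofReal (f x * r x) ∂μ := by
  have hdual : ∫⁻ x, ENNReal.ofReal (c x ^ 2 * (f x / r x)) ∂μ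
      = ∫⁻ x, ENNReal.ofReal (f x * r x) ∂μ := by
    calc ∫⁻ x, ENNReal.ofReal (c x ^ 2 * (f x / r x)) ∂μ
        = ∫⁻ x, ENNReal.ofReal (f x / r x) ∂(μ.map T) := by
          rw [hmap, lintegral_withDensity_eq_lintegral_mul _ (by fun_prop) (by fun_prop)]
          refine lintegral_congr fun x => ?_
          rw [Pi.mul_apply, ENNReal.ofReal_mul (sq_nonneg _)]
      _ = ∫⁻ x, ENNReal.ofReal (f x * r x) ∂μ := by
          rw [lintegral_map (by fun_prop) hT]
          refine lintegral_congr fun x => ?_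
          have hrx : r x = 1 / r (T x) := by rw [eq_div_iff (hr0 _).ne', mul_comm, hrT]
          rw [hfT, hrx, mul_one_div]
  have hamgm : ∀ x, 2 * (f x * c x) ≤ f x * r x + c x ^ 2 * (f x / r x) := fun x => by
    have hr := hr0 x
    have hgap : f x * r x + c x ^ 2 * (f x / r x) - 2 * (f x * c x)
        = f x * (r x - c x) ^ 2 / r x := by
      field_simp
      ring
    have hfx := hf0 x
    have hgap_nonneg : 0 ≤ f x * (r x - c x) ^ 2 / r x := by positivity
    linarith
  have h2 : 2 * ∫⁻ x, ENNReal.ofReal (f x * c x) ∂μ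
      ≤ 2 * ∫⁻ x, ENNReal.ofReal (f x * r x) ∂μ :=
    calc 2 * ∫⁻ x, ENNReal.ofReal (f x * c x) ∂μ
        = ∫⁻ x, ENNReal.ofReal (2 * (f x * c x)) ∂μ := by
          rw [← lintegral_const_mul _ (by fun_prop)]
          simp_rw [ENNReal.ofReal_mul zero_le_two, ENNReal.ofReal_ofNat]
      _ ≤ ∫⁻ x, ENNReal.ofReal (f x * r x) + ENNReal.ofReal (c x ^ 2 * (f x / r x)) ∂μ :=
          lintegral_mono fun x => (ENNReal.ofReal_le_ofReal (hamgm x)).trans ENNReal.ofReal_add_le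
      _ = 2 * ∫⁻ x, ENNReal.ofReal (f x * r x) ∂μ := by
          rw [lintegral_add_left (by fun_prop), hdual, two_mul]
  exact (ENNReal.mul_le_mul_iff_right two_ne_zero ENNReal.ofNat_ne_top).mp h2

theorem integral_mul_le_of_map_eq_withDensity (hT : Measurable T)
    (hmap : μ.map T = μ.withDensity fun x => ENNReal.ofReal (c x ^ 2))
    (hf : Measurable f) (hr : Measurable r) (hc : Measurable c)
    (hf0 : ∀ x, 0 ≤ f x) (hr0 : ∀ x, 0 < r x) (hc0 : ∀ x, 0 ≤ c x)
    (hfT : ∀ x, f (T x) = f x) (hrT : ∀ x, r (T x) * r x = 1)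
    (hfr : Integrable (fun x => f x * r x) μ) :
    ∫ x, f x * c x ∂μ ≤ ∫ x, f x * r x ∂μ := by
  rw [integral_eq_lintegral_of_nonneg_ae (.of_forall fun x => mul_nonneg (hf0 x) (hc0 x))
      (by fun_prop),
    integral_eq_lintegral_of_nonneg_ae (.of_forall fun x => mul_nonneg (hf0 x) (hr0 x).le)
      (by fun_prop)]
  exact ENNReal.toReal_mono hfr.lintegral_lt_top.ne
    (lintegral_mul_le_of_map_eq_withDensity hT hmap hf hr hc hf0 hr0 hfT hrT)

end ChangeOfVariables

theorem Real.exp_neg_mul_eq_cosh_sub_mul_sinh {s : ℝ} (hs : s = 1 ∨ s = -1) (t : ℝ) :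
    exp (-(t * s)) = cosh t - s * sinh t := by
  rcases hs with rfl | rfl
  · rw [mul_one, one_mul, cosh_sub_sinh]
  · rw [mul_neg_one, neg_neg, neg_one_mul, sub_neg_eq_add, cosh_add_sinh]

section Ising

variable [Fintype V] [DecidableEq V] {β : ℝ} {lam : Finset V → ℝ}

omit [Fintype V] in
theorem flipJ_flipJ (B : Finset V) (J : Finset V → ℝ) : flipJ B (flipJ B J) = J := by
  simp [flipJ]

omit [Fintype V] in
theorem measurable_flipJ (B : Finset V) : Measurable (flipJ (V := V) B) := by
  unfold flipJ
  fun_prop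

omit [Fintype V] [DecidableEq V] in
theorem sigmaA_eq_one_or_neg_one (A : Finset V) (σ : V → Bool) :
    sigmaA A σ = 1 ∨ sigmaA A σ = -1 := by
  refine Finset.prod_induction _ (fun x => x = 1 ∨ x = -1) ?_ (Or.inl rfl) ?_
  · rintro x y (rfl | rfl) (rfl | rfl) <;> norm_num
  · intro i _
    unfold spin
    split_ifs <;> simp

theorem Zfun_pos (J : Finset V → ℝ) : 0 < Zfun β lam J :=
  Finset.sum_pos (fun _ _ => exp_pos _) Finset.univ_nonempty

theorem measurable_Zfun : Measurable (Zfun (V := V) β lam) := by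
  unfold Zfun energy
  fun_prop

theorem energy_flipJ (B : Finset V) (J : Finset V → ℝ) (σ : V → Bool) :
    energy β lam (flipJ B J) σ = energy β lam J σ - 2 * β * lam B * J B * sigmaA B σ := by
  have hrest : ∑ A ∈ Finset.univ.erase B, lam A * flipJ B J A * sigmaA A σ
      = ∑ A ∈ Finset.univ.erase B, lam A * J A * sigmaA A σ :=
    Finset.sum_congr rfl fun A hA => by
      rw [flipJ, Function.update_of_ne (Finset.ne_of_mem_erase hA)]
  rw [energy, energy, ← Finset.add_sum_erase _ _ (Finset.mem_univ B),
    ← Finset.add_sum_erase _ _ (Finset.mem_univ B), hrest, flipJ, Function.update_self]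
  ring

theorem cosh_sub_corr_mul_sinh (B : Finset V) (J : Finset V → ℝ) :
    cosh (2 * β * lam B * J B) - corr β lam J B * sinh (2 * β * lam B * J B)
      = Zfun β lam (flipJ B J) / Zfun β lam J := by
  set t := 2 * β * lam B * J B
  have hZ := (Zfun_pos (β := β) (lam := lam) J).ne'
  have hflip : Zfun β lam (flipJ B J)
      = Zfun β lam J * cosh t - (∑ σ : V → Bool, sigmaA B σ * exp (energy β lam J σ)) * sinh t := by
    rw [Zfun, Zfun, Finset.sum_mul, Finset.sum_mul, ← Finset.sum_sub_distrib]
    refine Finset.sum_congr rfl fun σ _ => ?_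
    rw [energy_flipJ, sub_eq_add_neg, exp_add,
      exp_neg_mul_eq_cosh_sub_mul_sinh (sigmaA_eq_one_or_neg_one B σ)]
    ring
  rw [hflip, corr]
  field_simp

theorem map_flipJ_pi {P : Finset V → Measure ℝ} [∀ A, IsProbabilityMeasure (P A)]
    {B : Finset V} {b : ℝ} (hPB : densityRatio (P B) b) :
    (Measure.pi P).map (flipJ B)
      = (Measure.pi P).withDensity fun J => ENNReal.ofReal (exp (-2 * b * J B)) := by
  have : IsProbabilityMeasure ((P B).map fun x => -x) :=
    Measure.isProbabilityMeasure_map measurable_neg.aemeasurable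
  exact (Measure.pi_map_update_eq_withDensity (μ := P) B measurable_neg
    (ρ := fun x => ENNReal.ofReal (exp (-2 * b * x))) (by fun_prop) hPB :)

end Ising

theorem weighted_cosh_sinh_inequality_general [Fintype V] [DecidableEq V]
    (β : ℝ) (lam : Finset V → ℝ)
    (P : Finset V → Measure ℝ) [∀ A, IsProbabilityMeasure (P A)]
    (B : Finset V) (b : ℝ) (hPB : densityRatio (P B) b)
    (f : (Finset V → ℝ) → ℝ) (hf : Measurable f)
    (hf0 : ∀ J, 0 ≤ f J)
    (hfflip : ∀ J, f (flipJ B J) = f J)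
    (hint1 : Integrable (fun J => f J * (Real.cosh (2 * β * lam B * J B) -
      corr β lam J B * Real.sinh (2 * β * lam B * J B))) (Measure.pi P)) :
    ∫ J, f J * Real.exp (-b * J B) ∂(Measure.pi P) ≤
      ∫ J, f J * (Real.cosh (2 * β * lam B * J B) -
        corr β lam J B * Real.sinh (2 * β * lam B * J B)) ∂(Measure.pi P) := by
  have hmap : (Measure.pi P).map (flipJ B)
      = (Measure.pi P).withDensity fun J => ENNReal.ofReal (exp (-b * J B) ^ 2) := by
    simp_rw [← exp_nat_mul, Nat.cast_ofNat, ← mul_assoc, mul_neg, ← neg_mul]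
    exact map_flipJ_pi hPB
  simp_rw [cosh_sub_corr_mul_sinh] at hint1 ⊢
  refine integral_mul_le_of_map_eq_withDensity (measurable_flipJ B) hmap hf
    ((measurable_Zfun.comp (measurable_flipJ B)).div measurable_Zfun) (by fun_prop) hf0
    (fun J => div_pos (Zfun_pos _) (Zfun_pos _)) (fun J => (exp_pos _).le) hfflip
    (fun J => ?_) hint1
  rw [flipJ_flipJ, div_mul_div_comm, mul_comm, div_self (mul_pos (Zfun_pos _) (Zfun_pos _)).ne']

/-- Weighted single-coupling cosh–sinh inequality (intermediate step). -/
theorem weighted_cosh_sinh_inequality [Fintype V] [DecidableEq V]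
    (β : ℝ) (hβ : 0 < β) (lam : Finset V → ℝ)
    (P : Finset V → Measure ℝ) [∀ A, IsProbabilityMeasure (P A)]
    (B : Finset V) (hlamB : 0 < lam B) (b : ℝ) (hPB : densityRatio (P B) b)
    (f : (Finset V → ℝ) → ℝ) (hf : Measurable f)
    (hf0 : ∀ J, 0 ≤ f J)
    (hfflip : ∀ J, f (flipJ B J) = f J)
    (hint1 : Integrable (fun J => f J * (Real.cosh (2 * β * lam B * J B) -
      corr β lam J B * Real.sinh (2 * β * lam B * J B))) (Measure.pi P))
    (hint2 : Integrable (fun J => f J * Real.exp (-b * J B)) (Measure.pi P)) :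
    ∫ J, f J * Real.exp (-b * J B) ∂(Measure.pi P) ≤
      ∫ J, f J * (Real.cosh (2 * β * lam B * J B) -
        corr β lam J B * Real.sinh (2 * β * lam B * J B)) ∂(Measure.pi P) :=
  weighted_cosh_sinh_inequality_general β lam P B b hPB f hf hf0 hfflip hint1
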